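/- Let H be a thin spider with partition (S, K, R) such that the subgraph of H induced by R is P4-sparse, let u ∈ K, and let uw be a tail added to H (w ∉ V(H)). Then the minimum number of fill edges (excluding the tail uw) in a P4-sparse completion of H+uw equals |K| − 1. -/

import Mathlib

open SimpleGraph Set

variable {α : Type*}

/-- The graph `G + uw` obtained from `G` by adding the tail edge `uw`. -/
def addTail (G : SimpleGraph α) (u w : α) : SimpleGraph α :=
  G ⊔ SimpleGraph.fromEdgeSet {s(u, w)}

/-- The number of fill edges of a completion `G'` of the base graph `base`:
the edges of `G'` that are not edges of `base`. -/
noncomputable def fillCount (base G' : SimpleGraph α) : ℕ :=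
  (G'.edgeSet \ base.edgeSet).ncard

/-- `S` is an independent set of the graph `G`. -/
def IsIndepSetOn (G : SimpleGraph α) (S : Set α) : Prop :=
  ∀ x ∈ S, ∀ y ∈ S, ¬ G.Adj x y

/-- A graph is split if its vertex set can be partitioned into a clique and an
independent set. -/
def IsSplitGraph (G : SimpleGraph α) : Prop :=
  ∃ K S : Set α, K ∪ S = Set.univ ∧ Disjoint K S ∧ G.IsClique K ∧ IsIndepSetOn G S

/-- `a b c d` (in this order) induce a chordless path `P₄` in `G`. -/
def IsInducedP4 (G : SimpleGraph α) (a b c d : α) : Prop :=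
  a ≠ b ∧ a ≠ c ∧ a ≠ d ∧ b ≠ c ∧ b ≠ d ∧ c ≠ d ∧
  G.Adj a b ∧ G.Adj b c ∧ G.Adj c d ∧ ¬ G.Adj a c ∧ ¬ G.Adj a d ∧ ¬ G.Adj b d

/-- `a b c d` (in this order) induce a chordless cycle `C₄` in `G`. -/
def IsInducedC4 (G : SimpleGraph α) (a b c d : α) : Prop :=
  a ≠ b ∧ a ≠ c ∧ a ≠ d ∧ b ≠ c ∧ b ≠ d ∧ c ≠ d ∧
  G.Adj a b ∧ G.Adj b c ∧ G.Adj c d ∧ G.Adj d a ∧ ¬ G.Adj a c ∧ ¬ G.Adj b d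

/-- `a b c d` induce a `2K₂` (two independent edges `ab` and `cd`) in `G`. -/
def IsInduced2K2 (G : SimpleGraph α) (a b c d : α) : Prop :=
  a ≠ b ∧ a ≠ c ∧ a ≠ d ∧ b ≠ c ∧ b ≠ d ∧ c ≠ d ∧
  G.Adj a b ∧ G.Adj c d ∧ ¬ G.Adj a c ∧ ¬ G.Adj a d ∧ ¬ G.Adj b c ∧ ¬ G.Adj b d

/-- A graph is threshold iff it has no induced `C₄`, `P₄`, or `2K₂`. -/
def IsThresholdGraph (G : SimpleGraph α) : Prop :=
  (∀ a b c d, ¬ IsInducedC4 G a b c d) ∧ (∀ a b c d, ¬ IsInducedP4 G a b c d) ∧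
  (∀ a b c d, ¬ IsInduced2K2 G a b c d)

/-- A graph is quasi-threshold iff it has no induced `C₄` or `P₄`. -/
def IsQuasiThresholdGraph (G : SimpleGraph α) : Prop :=
  (∀ a b c d, ¬ IsInducedC4 G a b c d) ∧ (∀ a b c d, ¬ IsInducedP4 G a b c d)

/-- `t` is the vertex set of an induced `P₄` of `G`. -/
def IsP4SetOn (G : SimpleGraph α) (t : Set α) : Prop :=
  ∃ a b c d : α, t = {a, b, c, d} ∧ IsInducedP4 G a b c d

/-- A graph is `P₄`-sparse iff every set of five vertices induces at most one `P₄`. -/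
def IsP4Sparse (G : SimpleGraph α) : Prop :=
  ∀ s : Set α, s.ncard = 5 →
    ∀ t₁ ⊆ s, ∀ t₂ ⊆ s, IsP4SetOn G t₁ → IsP4SetOn G t₂ → t₁ = t₂

/-- The subgraph of `H` induced by the set `R` (as a graph on the same vertex type,
all vertices outside `R` being isolated). -/
def restrictSet (H : SimpleGraph α) (R : Set α) : SimpleGraph α where
  Adj x y := H.Adj x y ∧ x ∈ R ∧ y ∈ R
  symm := ⟨fun x y ⟨h, hx, hy⟩ => ⟨h.symm, hy, hx⟩⟩
  loopless := ⟨fun x h => H.loopless.irrefl x h.1⟩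

/-- `(S, K, R)` is a thin-spider partition of (the vertex set of) `H`. -/
def ThinSpider (H : SimpleGraph α) (S K R : Set α) : Prop :=
  IsIndepSetOn H S ∧ H.IsClique K ∧ S.ncard = K.ncard ∧ 2 ≤ K.ncard ∧
  Disjoint S K ∧ Disjoint S R ∧ Disjoint K R ∧
  (∀ r ∈ R, ∀ k ∈ K, H.Adj r k) ∧ (∀ r ∈ R, ∀ s ∈ S, ¬ H.Adj r s) ∧
  ∃ f : α → α, Set.BijOn f S K ∧ ∀ s ∈ S, ∀ k ∈ K, (H.Adj s k ↔ k = f s)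

/-- `(S, K, R)` is a thick-spider partition of (the vertex set of) `H`;
thick spiders are assumed to have `|K| ≥ 3`. -/
def ThickSpider (H : SimpleGraph α) (S K R : Set α) : Prop :=
  IsIndepSetOn H S ∧ H.IsClique K ∧ S.ncard = K.ncard ∧ 3 ≤ K.ncard ∧
  Disjoint S K ∧ Disjoint S R ∧ Disjoint K R ∧
  (∀ r ∈ R, ∀ k ∈ K, H.Adj r k) ∧ (∀ r ∈ R, ∀ s ∈ S, ¬ H.Adj r s) ∧
  ∃ f : α → α, Set.BijOn f S K ∧ ∀ s ∈ S, ∀ k ∈ K, (H.Adj s k ↔ k ≠ f s)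

/-- The set of possible numbers of fill edges of completions of `base` into the
graph class `C`. -/
def completionFills (C : SimpleGraph α → Prop) (base : SimpleGraph α) : Set ℕ :=
  {n | ∃ G' : SimpleGraph α, base ≤ G' ∧ C G' ∧ fillCount base G' = n}

/-!
Joining `w` to all of `K` turns `H + uw` into the thin spider `(S, K, R ∪ {w})`, whose head is
still `P₄`-sparse, at the price of the `|K| - 1` fill edges `wk`, `k ≠ u`. A thin spider with
`P₄`-sparse head is `P₄`-sparse: an induced `P₄` either lies in the head or is a path
`s (f s) (f s') s'` through two legs, and such a path is determined by its legs `A = {s, s'}`;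
since `A ∪ f '' A` has `2 |A|` vertices, two different ones do not fit into five vertices.

Conversely let `f s₀ = u`. For every leg `s ≠ s₀`, `H + uw` has the two induced `P₄`s
`s₀ u (f s) s` and `w u (f s) s` on five vertices, so a `P₄`-sparse completion contains a fill edge
between `{s₀, w, u}` and `{f s, s}`; these candidate sets are disjoint for distinct legs.
-/

namespace SimpleGraph

def addStar (G : SimpleGraph α) (w : α) (K : Set α) : SimpleGraph α :=
  G ⊔ fromEdgeSet ((fun k => s(w, k)) '' K)

lemma addStar_adj {G : SimpleGraph α} {w : α} {K : Set α} {x y : α} :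
    (G.addStar w K).Adj x y ↔ G.Adj x y ∨ (x = w ∧ y ∈ K ∨ y = w ∧ x ∈ K) ∧ x ≠ y := by
  simp only [addStar, sup_adj, fromEdgeSet_adj, Set.mem_image, Sym2.eq_iff]
  constructor
  · rintro (h | ⟨⟨k, hk, ⟨rfl, rfl⟩ | ⟨rfl, rfl⟩⟩, hne⟩)
    exacts [Or.inl h, Or.inr ⟨Or.inl ⟨rfl, hk⟩, hne⟩, Or.inr ⟨Or.inr ⟨rfl, hk⟩, hne⟩]
  · rintro (h | ⟨⟨rfl, hy⟩ | ⟨rfl, hx⟩, hne⟩)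
    exacts [Or.inl h, Or.inr ⟨⟨y, hy, Or.inl ⟨rfl, rfl⟩⟩, hne⟩,
      Or.inr ⟨⟨x, hx, Or.inr ⟨rfl, rfl⟩⟩, hne⟩]

lemma addStar_adj_of_ne {G : SimpleGraph α} {w : α} {K : Set α} {x y : α}
    (hx : x ≠ w) (hy : y ≠ w) : (G.addStar w K).Adj x y ↔ G.Adj x y := by
  simp [addStar_adj, hx, hy]

lemma addTail_eq_addStar (G : SimpleGraph α) (u w : α) : addTail G u w = G.addStar w {u} := by
  rw [addTail, addStar, Set.image_singleton, Sym2.eq_swap]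

lemma fillCount_addStar {G : SimpleGraph α} {w : α} {K₀ K : Set α} (hK₀ : K₀ ⊆ K)
    (hwK : w ∉ K) (hw : ∀ x, ¬ G.Adj w x) :
    fillCount (G.addStar w K₀) (G.addStar w K) = (K \ K₀).ncard := by
  have hstar : ∀ L : Set α, (G.addStar w L).edgeSet =
      G.edgeSet ∪ ((fun k => s(w, k)) '' L \ Sym2.diagSet) := fun L => by
    rw [addStar, edgeSet_sup, edgeSet_fromEdgeSet]
  have hnew : Disjoint ((fun k => s(w, k)) '' K) G.edgeSet := by
    rw [Set.disjoint_left]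
    rintro _ ⟨k, -, rfl⟩
    exact hw k
  have hdiag : ∀ L ⊆ K, (fun k => s(w, k)) '' L \ Sym2.diagSet = (fun k => s(w, k)) '' L := by
    intro L hL
    refine sdiff_eq_left.mpr (Set.disjoint_left.mpr ?_)
    rintro _ ⟨k, hk, rfl⟩ hd
    exact hwK (Sym2.mk_isDiag_iff.mp hd ▸ hL hk)
  have hinj : Function.Injective fun k => s(w, k) := fun _ _ => Sym2.congr_right.mp
  have hfill : (G.edgeSet ∪ (fun k => s(w, k)) '' K) \ (G.edgeSet ∪ (fun k => s(w, k)) '' K₀) =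
      (fun k => s(w, k)) '' K \ (fun k => s(w, k)) '' K₀ := by
    ext e
    have : e ∈ (fun k => s(w, k)) '' K → e ∉ G.edgeSet := fun he => Set.disjoint_left.mp hnew he
    simp only [Set.mem_sdiff, Set.mem_union]
    tauto
  rw [fillCount, hstar, hstar, hdiag K subset_rfl, hdiag K₀ hK₀, hfill, ← Set.image_sdiff hinj,
    Set.ncard_image_of_injective _ hinj]

lemma le_addStar (G : SimpleGraph α) (w : α) (K : Set α) : G ≤ G.addStar w K := le_sup_left

lemma addStar_mono {G : SimpleGraph α} {w : α} {K₀ K : Set α} (h : K₀ ⊆ K) :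
    G.addStar w K₀ ≤ G.addStar w K :=
  sup_le_sup_left (fromEdgeSet_mono (Set.image_mono h)) G

end SimpleGraph

section InducedP4

open SimpleGraph

variable {G G' : SimpleGraph α} {a b c d w : α}

lemma IsInducedP4.symm (h : IsInducedP4 G a b c d) : IsInducedP4 G d c b a := by
  obtain ⟨hab, hac, had, hbc, hbd, hcd, eab, ebc, ecd, nac, nad, nbd⟩ := h
  exact ⟨hcd.symm, hbd.symm, had.symm, hbc.symm, hac.symm, hab.symm, ecd.symm, ebc.symm, eab.symm,
    fun h => nbd h.symm, fun h => nad h.symm, fun h => nac h.symm⟩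

lemma IsInducedP4.of_le (h : IsInducedP4 G a b c d) (hle : G ≤ G') (hac : ¬ G'.Adj a c)
    (had : ¬ G'.Adj a d) (hbd : ¬ G'.Adj b d) : IsInducedP4 G' a b c d := by
  obtain ⟨h₁, h₂, h₃, h₄, h₅, h₆, eab, ebc, ecd, -, -, -⟩ := h
  exact ⟨h₁, h₂, h₃, h₄, h₅, h₆, hle eab, hle ebc, hle ecd, hac, had, hbd⟩

lemma IsInducedP4.restrictSet {R : Set α} (h : IsInducedP4 G a b c d)
    (hR : ({a, b, c, d} : Set α) ⊆ R) : IsInducedP4 (restrictSet G R) a b c d := by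
  simp only [Set.insert_subset_iff, Set.singleton_subset_iff] at hR
  obtain ⟨ha, hb, hc, hd⟩ := hR
  obtain ⟨h₁, h₂, h₃, h₄, h₅, h₆, eab, ebc, ecd, nac, nad, nbd⟩ := h
  exact ⟨h₁, h₂, h₃, h₄, h₅, h₆, ⟨eab, ha, hb⟩, ⟨ebc, hb, hc⟩, ⟨ecd, hc, hd⟩,
    fun h => nac h.1, fun h => nad h.1, fun h => nbd h.1⟩

lemma IsInducedP4.ncard_eq (h : IsInducedP4 G a b c d) : ({a, b, c, d} : Set α).ncard = 4 := by
  obtain ⟨hab, hac, had, hbc, hbd, hcd, -⟩ := h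
  rw [Set.ncard_insert_of_notMem (by simp [hab, hac, had]),
    Set.ncard_insert_of_notMem (by simp [hbc, hbd]), Set.ncard_pair hcd]

lemma IsP4SetOn.ncard_eq {t : Set α} (h : IsP4SetOn G t) : t.ncard = 4 := by
  obtain ⟨a, b, c, d, rfl, h⟩ := h
  exact h.ncard_eq

lemma IsP4Sparse.eq_of_isInducedP4 {a' : α} (hG : IsP4Sparse G) (h : IsInducedP4 G a b c d)
    (h' : IsInducedP4 G a' b c d) : a = a' := by
  by_contra hne
  have ha' : a' ∉ ({a, b, c, d} : Set α) := by
    obtain ⟨hab', hac', had', -⟩ := h'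
    simp [Ne.symm hne, hab', hac', had']
  have h5 : ({a', a, b, c, d} : Set α).ncard = 5 := by
    rw [Set.ncard_insert_of_notMem ha', h.ncard_eq]
  have heq := hG _ h5 _ (Set.subset_insert _ _) {a', b, c, d}
    (Set.insert_subset_insert (Set.subset_insert _ _)) ⟨a, b, c, d, rfl, h⟩ ⟨a', b, c, d, rfl, h'⟩
  exact ha' (heq ▸ Set.mem_insert _ _)

lemma IsP4Sparse.exists_fill_of_isInducedP4 {x y : α} (hle : G ≤ G') (hG' : IsP4Sparse G')
    (hx : IsInducedP4 G x b c d) (hy : IsInducedP4 G y b c d) (hxy : x ≠ y) :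
    ∃ e ∈ G'.edgeSet \ G.edgeSet, e ∈ Set.image2 Sym2.mk {x, y, b} {c, d} := by
  by_contra! hno
  have kept : ∀ p ∈ ({x, y, b} : Set α), ∀ q ∈ ({c, d} : Set α), ¬ G.Adj p q → ¬ G'.Adj p q :=
    fun p hp q hq hG hG' => hno s(p, q) ⟨hG', hG⟩ (Set.mem_image2_of_mem hp hq)
  have survives : ∀ {z}, IsInducedP4 G z b c d → z ∈ ({x, y} : Set α) → IsInducedP4 G' z b c d := by
    intro z hz hzxy
    have ⟨_, _, _, _, _, _, _, _, _, nzc, nzd, nbd⟩ := hz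
    refine hz.of_le hle (kept _ ?_ _ (by simp) nzc) (kept _ ?_ _ (by simp) nzd)
      (kept _ (by simp) _ (by simp) nbd) <;> aesop
  exact hxy (hG'.eq_of_isInducedP4 (survives hx (by simp)) (survives hy (by simp)))

lemma IsInducedP4.addStar {K : Set α} (h : IsInducedP4 G a b c d)
    (hw : w ∉ ({a, b, c, d} : Set α)) : IsInducedP4 (G.addStar w K) a b c d := by
  simp only [Set.mem_insert_iff, Set.mem_singleton_iff, not_or] at hw
  obtain ⟨hwa, hwb, hwc, hwd⟩ := hw
  have ⟨_, _, _, _, _, _, _, _, _, nac, nad, nbd⟩ := h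
  exact h.of_le (G.le_addStar w K)
    (by rwa [addStar_adj_of_ne (Ne.symm hwa) (Ne.symm hwc)])
    (by rwa [addStar_adj_of_ne (Ne.symm hwa) (Ne.symm hwd)])
    (by rwa [addStar_adj_of_ne (Ne.symm hwb) (Ne.symm hwd)])

lemma IsInducedP4.addStar_pendant (h : IsInducedP4 G a b c d) (hw : ∀ x, ¬ G.Adj w x)
    (hwb : w ≠ b) (hwc : w ≠ c) (hwd : w ≠ d) : IsInducedP4 (G.addStar w {b}) w b c d := by
  obtain ⟨-, -, -, hbc, hbd, hcd, -, ebc, ecd, -, -, nbd⟩ := h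
  refine ⟨hwb, hwc, hwd, hbc, hbd, hcd, addStar_adj.mpr (Or.inr ⟨Or.inl ⟨rfl, rfl⟩, hwb⟩),
    G.le_addStar w _ ebc, G.le_addStar w _ ecd, ?_, ?_, ?_⟩
  · simp [addStar_adj, hw, hwc, hwc.symm, hbc.symm]
  · simp [addStar_adj, hw, hwd, hwd.symm, hbd.symm]
  · rwa [addStar_adj_of_ne hwb.symm hwd.symm]

end InducedP4

lemma Set.ncard_le_ncard_of_forall_exists_mem {ι β : Type*} {I : Set ι} {F : Set β}
    {P : ι → Set β} (hP : I.PairwiseDisjoint P) (h : ∀ i ∈ I, ∃ e ∈ F, e ∈ P i)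
    (hF : F.Finite) : I.ncard ≤ F.ncard := by
  rcases I.eq_empty_or_nonempty with rfl | ⟨i₀, hi₀⟩
  · simp
  have : Nonempty β := ⟨(h i₀ hi₀).choose⟩
  choose! e heF heP using h
  exact Set.ncard_le_ncard_of_injOn e heF
    (fun i hi j hj hij => hP.elim_set hi hj _ (heP i hi) (hij ▸ heP j hj)) hF

lemma Sym2.disjoint_image2_mk {T A B : Set α} (hA : Disjoint A T) (hAB : Disjoint A B) :
    Disjoint (Set.image2 Sym2.mk T A) (Set.image2 Sym2.mk T B) := by
  rw [Set.disjoint_left]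
  rintro _ ⟨x, hx, a, ha, rfl⟩ ⟨x', hx', b, hb, he⟩
  rcases Sym2.eq_iff.mp he with ⟨-, hba⟩ | ⟨hxa, -⟩
  exacts [Set.disjoint_left.mp hAB ha (hba ▸ hb), Set.disjoint_left.mp hA ha (hxa ▸ hx')]

lemma Set.ncard_union_image_eq {f : α → α} {S A : Set α} (hinj : Set.InjOn f S)
    (hdisj : Disjoint S (f '' S)) (hA : A ⊆ S) (hfin : A.Finite) :
    (A ∪ f '' A).ncard = 2 * A.ncard := by
  rw [Set.ncard_union_eq (hdisj.mono hA (Set.image_mono hA)) hfin (hfin.image f),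
    (hinj.mono hA).ncard_image, two_mul]

lemma Set.eq_of_union_image_subset {f : α → α} {S A₁ A₂ s : Set α} {n : ℕ}
    (hinj : Set.InjOn f S) (hdisj : Disjoint S (f '' S)) (hA₁S : A₁ ⊆ S) (hA₂S : A₂ ⊆ S)
    (hA₁ : A₁.ncard = n) (hA₂ : A₂.ncard = n) (hsub : A₁ ∪ f '' A₁ ∪ (A₂ ∪ f '' A₂) ⊆ s)
    (hsfin : s.Finite) (hs : s.ncard ≤ 2 * n + 1) : A₁ = A₂ := by
  have hfin : (A₁ ∪ A₂).Finite :=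
    hsfin.subset (Set.union_subset_union Set.subset_union_left Set.subset_union_left |>.trans hsub)
  have hU := Set.ncard_le_ncard hsub hsfin
  rw [Set.union_union_union_comm, ← Set.image_union,
    Set.ncard_union_image_eq hinj hdisj (Set.union_subset hA₁S hA₂S) hfin] at hU
  have hA₁U : A₁ = A₁ ∪ A₂ := Set.eq_of_subset_of_ncard_le Set.subset_union_left (by omega) hfin
  have hA₂U : A₂ = A₁ ∪ A₂ := Set.eq_of_subset_of_ncard_le Set.subset_union_right (by omega) hfin
  exact hA₁U.trans hA₂U.symm

lemma Set.not_disjoint_of_ncard_lt_add {s t₁ t₂ : Set α} (hsfin : s.Finite) (h₁ : t₁ ⊆ s)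
    (h₂ : t₂ ⊆ s) (h : s.ncard < t₁.ncard + t₂.ncard) : ¬ Disjoint t₁ t₂ := by
  intro hdisj
  rw [← Set.ncard_union_eq hdisj (hsfin.subset h₁) (hsfin.subset h₂)] at h
  exact (Set.ncard_le_ncard (Set.union_subset h₁ h₂) hsfin).not_gt h

section ThinSpider

variable {H : SimpleGraph α} {S K R : Set α} {f : α → α} {a b c d : α}

lemma IsInducedP4.legs_of_left_mem (hnbr : ∀ s ∈ S, ∀ x, H.Adj s x → x = f s)
    (hKadj : ∀ k ∈ K, ∀ x ∈ K ∪ R, k ≠ x → H.Adj k x) (hf : Set.MapsTo f S K)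
    (hcover : ∀ x ∉ S, x ∈ K ∪ R) (h : IsInducedP4 H a b c d) (ha : a ∈ S) :
    d ∈ S ∧ b = f a ∧ c = f d := by
  obtain ⟨-, -, -, -, hbd, -, eab, -, ecd, -, -, nbd⟩ := h
  have hb : b = f a := hnbr a ha b eab
  have hd : d ∈ S := by
    by_contra hd
    exact nbd (hKadj b (hb ▸ hf ha) d (hcover d hd) hbd)
  exact ⟨hd, hb, hnbr d hd c ecd.symm⟩

lemma IsInducedP4.subset_of_ends_notMem (hnbr : ∀ s ∈ S, ∀ x, H.Adj s x → x = f s)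
    (hKadj : ∀ k ∈ K, ∀ x ∈ K ∪ R, k ≠ x → H.Adj k x) (hcover : ∀ x ∉ S, x ∈ K ∪ R)
    (h : IsInducedP4 H a b c d) (ha : a ∉ S) (hd : d ∉ S) : ({a, b, c, d} : Set α) ⊆ R := by
  obtain ⟨-, hac, -, -, hbd, -, eab, ebc, ecd, nac, -, nbd⟩ := h
  have hb : b ∉ S := fun hb =>
    hac ((hnbr b hb a eab.symm).trans (hnbr b hb c ebc).symm)
  have hc : c ∉ S := fun hc =>
    hbd ((hnbr c hc b ebc.symm).trans (hnbr c hc d ecd).symm)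
  have mem_R : ∀ x ∉ S, ∀ y ∉ S, x ≠ y → ¬ H.Adj x y → x ∈ R := by
    intro x hx y hy hxy hnadj
    rcases hcover x hx with hxK | hxR
    · exact absurd (hKadj x hxK y (hcover y hy) hxy) hnadj
    · exact hxR
  simp only [Set.insert_subset_iff, Set.singleton_subset_iff]
  exact ⟨mem_R a ha c hc hac nac, mem_R b hb d hd hbd nbd,
    mem_R c hc a ha hac.symm fun h => nac h.symm, mem_R d hd b hb hbd.symm fun h => nbd h.symm⟩

lemma IsP4SetOn.subset_or_eq_union_image (hnbr : ∀ s ∈ S, ∀ x, H.Adj s x → x = f s)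
    (hKadj : ∀ k ∈ K, ∀ x ∈ K ∪ R, k ≠ x → H.Adj k x) (hf : Set.MapsTo f S K)
    (hcover : ∀ x ∉ S, x ∈ K ∪ R) {t : Set α} (ht : IsP4SetOn H t) :
    t ⊆ R ∨ ∃ A ⊆ S, A.ncard = 2 ∧ t = A ∪ f '' A := by
  obtain ⟨a, b, c, d, rfl, h⟩ := ht
  have leg_path : a ∈ S → d ∈ S → b = f a → c = f d →
      ∃ A ⊆ S, A.ncard = 2 ∧ ({a, b, c, d} : Set α) = A ∪ f '' A := by
    rintro ha hd rfl rfl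
    refine ⟨{a, d}, Set.pair_subset ha hd, Set.ncard_pair h.2.2.1, ?_⟩
    rw [Set.image_pair]
    ext x
    simp only [Set.mem_insert_iff, Set.mem_singleton_iff, Set.mem_union]
    tauto
  by_cases ha : a ∈ S
  · obtain ⟨hd, hb, hc⟩ := h.legs_of_left_mem hnbr hKadj hf hcover ha
    exact Or.inr (leg_path ha hd hb hc)
  by_cases hd : d ∈ S
  · exact absurd (h.symm.legs_of_left_mem hnbr hKadj hf hcover hd).1 ha
  exact Or.inl (h.subset_of_ends_notMem hnbr hKadj hcover ha hd)

lemma IsP4SetOn.restrictSet {G : SimpleGraph α} {t : Set α} (ht : IsP4SetOn G t) (hR : t ⊆ R) :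
    IsP4SetOn (restrictSet G R) t := by
  obtain ⟨a, b, c, d, rfl, h⟩ := ht
  exact ⟨a, b, c, d, rfl, h.restrictSet hR⟩

lemma ThinSpider.isP4Sparse (h : ThinSpider H S K R) (hcover : S ∪ K ∪ R = Set.univ)
    (hR : IsP4Sparse (restrictSet H R)) : IsP4Sparse H := by
  obtain ⟨hS, hK, -, -, hSK, hSR, hKR, hRK, hRS, f, hf, hfadj⟩ := h
  have hcover' : ∀ x ∉ S, x ∈ K ∪ R := fun x hx => by
    have := hcover ▸ Set.mem_univ x
    simp only [Set.mem_union] at this ⊢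
    tauto
  have hnbr : ∀ s ∈ S, ∀ x, H.Adj s x → x = f s := by
    intro s hs x hsx
    by_cases hx : x ∈ S
    · exact absurd hsx (hS s hs x hx)
    rcases hcover' x hx with hxK | hxR
    · exact (hfadj s hs x hxK).1 hsx
    · exact absurd hsx.symm (hRS x hxR s hs)
  have hKadj : ∀ k ∈ K, ∀ x ∈ K ∪ R, k ≠ x → H.Adj k x := by
    rintro k hk x (hxK | hxR) hkx
    exacts [hK hk hxK hkx, (hRK x hxR k hk).symm]
  have hdisj : Disjoint S (f '' S) := hSK.mono_right (hf.mapsTo.image_subset)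
  have hlegs : ∀ A ⊆ S, A ∪ f '' A ⊆ S ∪ K := fun A hA =>
    Set.union_subset_union hA ((Set.image_mono hA).trans hf.mapsTo.image_subset)
  have hRSK : Disjoint R (S ∪ K) := Set.disjoint_union_right.mpr ⟨hSR.symm, hKR.symm⟩
  intro s hs t₁ ht₁s t₂ ht₂s ht₁ ht₂
  have hsfin : s.Finite := Set.finite_of_ncard_ne_zero (by omega)
  have hsum : s.ncard < t₁.ncard + t₂.ncard := by rw [hs, ht₁.ncard_eq, ht₂.ncard_eq]; norm_num
  have hclassify := fun {t} (ht : IsP4SetOn H t) =>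
    ht.subset_or_eq_union_image hnbr hKadj hf.mapsTo hcover'
  rcases hclassify ht₁ with hR₁ | ⟨A₁, hA₁S, hA₁, rfl⟩ <;>
    rcases hclassify ht₂ with hR₂ | ⟨A₂, hA₂S, hA₂, rfl⟩
  · exact hR s hs t₁ ht₁s t₂ ht₂s (ht₁.restrictSet hR₁) (ht₂.restrictSet hR₂)
  · exact (Set.not_disjoint_of_ncard_lt_add hsfin ht₁s ht₂s hsum
      (hRSK.mono hR₁ (hlegs A₂ hA₂S))).elim
  · exact (Set.not_disjoint_of_ncard_lt_add hsfin ht₂s ht₁s (by omega)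
      (hRSK.mono hR₂ (hlegs A₁ hA₁S))).elim
  · obtain rfl := Set.eq_of_union_image_subset hf.injOn hdisj hA₁S hA₂S hA₁ hA₂
      (Set.union_subset ht₁s ht₂s) hsfin (by omega)
    rfl

section Tail

open SimpleGraph

variable {H : SimpleGraph α} {S K R : Set α} {u w : α}

lemma isInducedP4_of_legs {f : α → α} (hS : IsIndepSetOn H S) (hK : H.IsClique K)
    (hSK : Disjoint S K) (hf : Set.BijOn f S K) (hfadj : ∀ s ∈ S, ∀ k ∈ K, (H.Adj s k ↔ k = f s))
    {s s' : α} (hs : s ∈ S) (hs' : s' ∈ S) (hne : s ≠ s') :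
    IsInducedP4 H s (f s) (f s') s' := by
  have hfs := hf.mapsTo hs
  have hfs' := hf.mapsTo hs'
  have hff : f s ≠ f s' := fun h => hne (hf.injOn hs hs' h)
  have hSK_ne : ∀ {x y}, x ∈ S → y ∈ K → x ≠ y := fun hx hy h => hSK.ne_of_mem hx hy h
  exact ⟨hSK_ne hs hfs, hSK_ne hs hfs', hne, hff, (hSK_ne hs' hfs).symm, (hSK_ne hs' hfs').symm,
    (hfadj s hs _ hfs).mpr rfl, hK hfs hfs' hff, ((hfadj s' hs' _ hfs').mpr rfl).symm,
    fun h => hff ((hfadj s hs _ hfs').mp h).symm, hS s hs s' hs',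
    fun h => hff ((hfadj s' hs' _ hfs).mp h.symm)⟩

lemma ThinSpider.ncard_sub_one_le_fillCount [Finite α] {G' : SimpleGraph α}
    (h : ThinSpider H S K R) (hwS : w ∉ S) (hwK : w ∉ K) (hw : ∀ x, ¬ H.Adj w x) (hu : u ∈ K)
    (hle : H.addStar w {u} ≤ G') (hG' : IsP4Sparse G') :
    K.ncard - 1 ≤ fillCount (H.addStar w {u}) G' := by
  obtain ⟨hS, hK, hcard, -, hSK, -, -, -, -, f, hf, hfadj⟩ := h
  obtain ⟨s₀, hs₀, rfl⟩ := hf.surjOn hu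
  have hSK_ne : ∀ {x y}, x ∈ S → y ∈ K → x ≠ y := fun hx hy h => hSK.ne_of_mem hx hy h
  have hfinj : ∀ {s}, s ∈ S → s ≠ s₀ → f s ≠ f s₀ := fun hs hne h => hne (hf.injOn hs hs₀ h)
  have hwf : ∀ {s}, s ∈ S → w ≠ f s := fun hs h => hwK (h ▸ hf.mapsTo hs)
  have hwS' : ∀ {s}, s ∈ S → w ≠ s := fun hs h => hwS (h ▸ hs)
  have hfill : ∀ s ∈ S \ {s₀}, ∃ e ∈ G'.edgeSet \ (H.addStar w {f s₀}).edgeSet,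
      e ∈ Set.image2 Sym2.mk {s₀, w, f s₀} {f s, s} := by
    rintro s ⟨hs, hss₀ : s ≠ s₀⟩
    have hP := isInducedP4_of_legs hS hK hSK hf hfadj hs₀ hs hss₀.symm
    have hwP : w ∉ ({s₀, f s₀, f s, s} : Set α) := by
      simp only [Set.mem_insert_iff, Set.mem_singleton_iff, not_or]
      exact ⟨hwS' hs₀, hwf hs₀, hwf hs, hwS' hs⟩
    exact hG'.exists_fill_of_isInducedP4 hle (hP.addStar hwP)
      (hP.addStar_pendant hw (hwf hs₀) (hwf hs) (hwS' hs)) (hwS' hs₀).symm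
  have hdisj : (S \ {s₀}).PairwiseDisjoint fun s => Set.image2 Sym2.mk {s₀, w, f s₀} {f s, s} := by
    rintro s ⟨hs, hss₀ : s ≠ s₀⟩ s' ⟨hs', -⟩ hss'
    refine Sym2.disjoint_image2_mk ?_ ?_ <;>
      simp only [Set.disjoint_insert_left, Set.disjoint_singleton_left, Set.mem_insert_iff,
        Set.mem_singleton_iff, not_or]
    · exact ⟨⟨(hSK_ne hs₀ (hf.mapsTo hs)).symm, (hwf hs).symm, hfinj hs hss₀⟩,
        ⟨hss₀, (hwS' hs).symm, hSK_ne hs (hf.mapsTo hs₀)⟩⟩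
    · exact ⟨⟨fun h => hss' (hf.injOn hs hs' h), (hSK_ne hs' (hf.mapsTo hs)).symm⟩,
        ⟨hSK_ne hs (hf.mapsTo hs'), hss'⟩⟩
  calc K.ncard - 1 = (S \ {s₀}).ncard := by rw [Set.ncard_sdiff_singleton_of_mem hs₀, hcard]
    _ ≤ fillCount (H.addStar w {f s₀}) G' :=
      Set.ncard_le_ncard_of_forall_exists_mem hdisj hfill (Set.toFinite _)

lemma ThinSpider.addStar (h : ThinSpider H S K R) (hw : w ∉ S ∪ K ∪ R) (hwH : ∀ x, ¬ H.Adj w x) :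
    ThinSpider (H.addStar w K) S K (insert w R) := by
  obtain ⟨hS, hK, hcard, hK2, hSK, hSR, hKR, hRK, hRS, f, hf, hfadj⟩ := h
  have hne : ∀ x ∈ S ∪ K ∪ R, x ≠ w := fun x hx h => hw (h ▸ hx)
  have hneS : ∀ x ∈ S, x ≠ w := fun x hx => hne x (Or.inl (Or.inl hx))
  have hneK : ∀ x ∈ K, x ≠ w := fun x hx => hne x (Or.inl (Or.inr hx))
  refine ⟨fun x hx y hy => by rw [addStar_adj_of_ne (hneS x hx) (hneS y hy)]; exact hS x hx y hy,
    hK.mono (H.le_addStar w K), hcard, hK2, hSK,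
    Set.disjoint_insert_right.mpr ⟨fun hwS => hneS w hwS rfl, hSR⟩,
    Set.disjoint_insert_right.mpr ⟨fun hwK => hneK w hwK rfl, hKR⟩, ?_, ?_, f, hf,
    fun s hs k hk => by rw [addStar_adj_of_ne (hneS s hs) (hneK k hk)]; exact hfadj s hs k hk⟩
  · rintro r (rfl | hr) k hk
    · exact addStar_adj.mpr (Or.inr ⟨Or.inl ⟨rfl, hk⟩, (hneK k hk).symm⟩)
    · exact H.le_addStar w K (hRK r hr k hk)
  · rintro r (rfl | hr) s hs
    · simp [addStar_adj, hwH, hneS s hs, Set.disjoint_left.mp hSK hs]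
    · rw [addStar_adj_of_ne (hne r (Or.inr hr)) (hneS s hs)]
      exact hRS r hr s hs

lemma restrictSet_addStar_insert (hwK : w ∉ K) (hwR : w ∉ R) (hKR : Disjoint K R)
    (hw : ∀ x, ¬ H.Adj w x) : restrictSet (H.addStar w K) (insert w R) = restrictSet H R := by
  ext x y
  simp only [restrictSet, addStar_adj, Set.mem_insert_iff]
  have hKR' : ∀ z ∈ K, z ∉ R := fun z hz => Set.disjoint_left.mp hKR hz
  have hw' : ∀ z, ¬ H.Adj z w := fun z h => hw z h.symm
  constructor
  · rintro ⟨hxy, hx | hx, hy | hy⟩ <;> subst_vars <;> aesop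
  · rintro ⟨hxy, hx, hy⟩
    exact ⟨Or.inl hxy, Or.inr hx, Or.inr hy⟩

lemma ThinSpider.isP4Sparse_addStar (h : ThinSpider H S K R) (hcover : S ∪ K ∪ R = {w}ᶜ)
    (hw : ∀ x, ¬ H.Adj w x) (hR : IsP4Sparse (restrictSet H R)) : IsP4Sparse (H.addStar w K) := by
  have hwSKR : w ∉ S ∪ K ∪ R := by simp [hcover]
  have hcover' : S ∪ K ∪ insert w R = Set.univ := by
    ext x
    have := congrArg (x ∈ ·) hcover
    simp only [Set.mem_union, Set.mem_compl_iff, Set.mem_singleton_iff, eq_iff_iff] at this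
    simp only [Set.mem_union, Set.mem_insert_iff, Set.mem_univ, iff_true]
    tauto
  have ⟨_, _, _, _, _, _, hKR, _⟩ := h
  refine (h.addStar hwSKR hw).isP4Sparse hcover' ?_
  rwa [restrictSet_addStar_insert (fun h => hwSKR (Or.inl (Or.inr h))) (fun h => hwSKR (Or.inr h))
    hKR hw]

end Tail

/-- tail at `u ∈ K` of a thin spider with `H[R]` P₄-sparse. -/
theorem thinSpider_tail_K [Fintype α]
    (H : SimpleGraph α) (u w : α) (S K R : Set α)
    (hspider : ThinSpider H S K R)
    (hcover : S ∪ K ∪ R = {w}ᶜ)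
    (hw : ∀ x, ¬ H.Adj w x)
    (hRsparse : IsP4Sparse (restrictSet H R)) (hu : u ∈ K) :
    IsLeast (completionFills IsP4Sparse (addTail H u w)) (K.ncard - 1) := by
  have hwSKR : w ∉ S ∪ K ∪ R := by simp [hcover]
  have hwK : w ∉ K := fun h => hwSKR (Or.inl (Or.inr h))
  rw [addTail_eq_addStar]
  refine ⟨⟨H.addStar w K, addStar_mono (Set.singleton_subset_iff.mpr hu),
    hspider.isP4Sparse_addStar hcover hw hRsparse, ?_⟩, ?_⟩
  · rw [fillCount_addStar (Set.singleton_subset_iff.mpr hu) hwK hw,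
      Set.ncard_sdiff_singleton_of_mem hu]
  · rintro n ⟨G', hle, hG', rfl⟩
    exact hspider.ncard_sub_one_le_fillCount (fun h => hwSKR (Or.inl (Or.inl h))) hwK hw hu hle hG'
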